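/- arXiv:2605.26783 — 3 statements merged into one kernel-verified Lean document; each statement's English description precedes it below -/
import Mathlib

section
/- Let n₁, n₂ ≥ 0 and c ∈ ℝ. The function r(s) = 1 + 2(1−s)n₁ + 2s n₂ − 4√(s(1−s))·c on s ∈ [0,1] attains its minimum value r_min = 1 + n₁ + n₂ − √((n₁−n₂)² + 4c²), provided c ≥ 0. -/
/-!
Writing `a = 2s − 1` and `b = 2√(s(1−s))`, the point `(a, b)` runs over the upper unit
semicircle as `s` runs over `[0, 1]`, and
`r(s) = 1 + n₁ + n₂ − (a (n₁ − n₂) + b (2c))`.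
By Cauchy–Schwarz the bracket is at most `√((n₁ − n₂)² + (2c)²)`, with equality when `(a, b)`
is the unit vector along `(n₁ − n₂, 2c)`; since `c ≥ 0`, that vector lies on the upper semicircle.
-/

open Real Set

lemma two_mul_sub_one_sq_add_two_mul_sqrt_sq {s : ℝ} (hs : s ∈ Icc (0 : ℝ) 1) :
    (2 * s - 1) ^ 2 + (2 * √(s * (1 - s))) ^ 2 = 1 := by
  rw [mul_pow, sq_sqrt (mul_nonneg hs.1 (sub_nonneg.2 hs.2))]
  ring

lemma mul_add_mul_le_sqrt_sq_add_sq {a b : ℝ} (hab : a ^ 2 + b ^ 2 = 1) (x y : ℝ) :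
    a * x + b * y ≤ √(x ^ 2 + y ^ 2) := by
  have hcs : (a * x + b * y) ^ 2 ≤ x ^ 2 + y ^ 2 := by
    nlinarith [sq_nonneg (a * y - b * x)]
  calc a * x + b * y ≤ |a * x + b * y| := le_abs_self _
    _ = √((a * x + b * y) ^ 2) := (sqrt_sq_eq_abs _).symm
    _ ≤ √(x ^ 2 + y ^ 2) := sqrt_le_sqrt hcs

lemma exists_mem_Icc_two_mul_sub_one_mul_add_eq_sqrt (x : ℝ) {y : ℝ} (hy : 0 ≤ y) :
    ∃ s ∈ Icc (0 : ℝ) 1, (2 * s - 1) * x + 2 * √(s * (1 - s)) * y = √(x ^ 2 + y ^ 2) := by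
  set R := √(x ^ 2 + y ^ 2)
  have hR2 : R ^ 2 = x ^ 2 + y ^ 2 := sq_sqrt (by positivity)
  have hR0 : 0 ≤ R := sqrt_nonneg _
  rcases hR0.eq_or_lt with hR | hR
  · have hx : x = 0 := by nlinarith [sq_nonneg y]
    refine ⟨0, left_mem_Icc.2 zero_le_one, ?_⟩
    simp [hx, R, ← hR]
  obtain ⟨hRx, hxR⟩ := abs_le_of_sq_le_sq' (by nlinarith [sq_nonneg y] : x ^ 2 ≤ R ^ 2) hR0
  -- `s` is chosen so that `(2s − 1, 2√(s(1−s))) = (x, y) / R`.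
  refine ⟨(1 + x / R) / 2, ⟨?_, ?_⟩, ?_⟩
  · have : -1 ≤ x / R := by rw [le_div_iff₀ hR]; linarith
    linarith
  · have : x / R ≤ 1 := by rw [div_le_one hR]; linarith
    linarith
  · have hs : (1 + x / R) / 2 * (1 - (1 + x / R) / 2) = (y / (2 * R)) ^ 2 := by
      field_simp
      linear_combination hR2
    rw [hs, sqrt_sq (by positivity)]
    field_simp
    linear_combination -hR2

theorem duan_simon_minimization_general (n₁ n₂ c : ℝ) (hc : 0 ≤ c) :
    IsLeast
      ((fun s : ℝ => 1 + 2 * (1 - s) * n₁ + 2 * s * n₂ - 4 * Real.sqrt (s * (1 - s)) * c) ''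
        Set.Icc (0 : ℝ) 1)
      (1 + n₁ + n₂ - Real.sqrt ((n₁ - n₂) ^ 2 + 4 * c ^ 2)) := by
  have hr (s : ℝ) : 1 + 2 * (1 - s) * n₁ + 2 * s * n₂ - 4 * √(s * (1 - s)) * c
      = 1 + n₁ + n₂ - ((2 * s - 1) * (n₁ - n₂) + 2 * √(s * (1 - s)) * (2 * c)) := by ring
  have hR : (n₁ - n₂) ^ 2 + 4 * c ^ 2 = (n₁ - n₂) ^ 2 + (2 * c) ^ 2 := by ring
  rw [hR]
  constructor
  · obtain ⟨s, hs, heq⟩ :=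
      exists_mem_Icc_two_mul_sub_one_mul_add_eq_sqrt (n₁ - n₂) (by positivity : 0 ≤ 2 * c)
    exact ⟨s, hs, by simp only [hr, heq]⟩
  · rintro _ ⟨s, hs, rfl⟩
    simp only [hr]
    linarith [mul_add_mul_le_sqrt_sq_add_sq (two_mul_sub_one_sq_add_two_mul_sqrt_sq hs)
      (n₁ - n₂) (2 * c)]

/-- Minimization of the Duan–Simon value over the mixing parameter: for
`n₁, n₂ ≥ 0` and `c ≥ 0`, the function
`r(s) = 1 + 2(1−s)n₁ + 2s n₂ − 4√(s(1−s)) c` on `s ∈ [0,1]` attains the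
minimum value `1 + n₁ + n₂ − √((n₁−n₂)² + 4c²)`. -/
theorem duan_simon_minimization (n₁ n₂ c : ℝ) (hn₁ : 0 ≤ n₁) (hn₂ : 0 ≤ n₂) (hc : 0 ≤ c) :
    IsLeast
      ((fun s : ℝ => 1 + 2 * (1 - s) * n₁ + 2 * s * n₂ - 4 * Real.sqrt (s * (1 - s)) * c) ''
        Set.Icc (0 : ℝ) 1)
      (1 + n₁ + n₂ - Real.sqrt ((n₁ - n₂) ^ 2 + 4 * c ^ 2)) :=
  duan_simon_minimization_general n₁ n₂ c hc
end

section
/- Let n(ω) = (1/π)·(Γ/2)/(ω² + (Γ/2)²) be a Lorentzian of width Γ > 0 centered at 0. Then the principal value integral P∫ n(ω')/(ω − ω') dω' equals ω/(ω² + (Γ/2)²) for every real ω, and consequently Γ(ω) := 2π n(ω) / ([P∫ n(ω')/(ω−ω') dω']² + π² n(ω)²) = Γ is constant. -/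
/-!
Partial fractions give an explicit primitive of `n(x)/(ω - x)` on each side of the pole,
built from `log |x - ω|`, `log (x² + a²)` and `arctan (x / a)`. The truncated integral is
therefore the jump of the arctan term between `±∞`, namely `ω / (ω² + a²)`, plus the
difference of the primitive at `ω ∓ ε`; in that difference the singular terms `log ε` cancel,
so it is continuous in `ε` and vanishes at `ε = 0`. The formula for `Γ(ω)` is then algebra.
-/

open Real MeasureTheory Filter Topology Set Bornology

noncomputable def lorentzian (a x : ℝ) : ℝ := 1 / π * (a / (x ^ 2 + a ^ 2))

lemma integrable_lorentzian {a : ℝ} (ha : 0 ≤ a) : Integrable (lorentzian a) :=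
  (ProbabilityTheory.integrable_cauchyPDFReal 0 (γ := a.toNNReal)).congr <|
    ae_of_all _ fun x => by
      rw [ProbabilityTheory.cauchyPDFReal_def, lorentzian, Real.coe_toNNReal a ha, sub_zero]
      ring

lemma integrableOn_lorentzian_div_sub {a : ℝ} (ha : 0 ≤ a) (ω : ℝ) {ε : ℝ} (hε : 0 < ε) :
    IntegrableOn (fun x => lorentzian a x / (ω - x)) {x | ε < |ω - x|} := by
  refine Integrable.mono' ((integrable_lorentzian ha).div_const ε).integrableOn
    (by unfold lorentzian; fun_prop : Measurable _).aestronglyMeasurable ?_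
  filter_upwards [ae_restrict_mem (isOpen_lt continuous_const (by fun_prop)).measurableSet]
    with x (hx : ε < |ω - x|)
  have : 0 ≤ lorentzian a x := by unfold lorentzian; positivity
  rw [norm_div, Real.norm_of_nonneg this, Real.norm_eq_abs]
  gcongr

/-- A primitive of `x ↦ lorentzian a x / (ω - x)` off `x = ω`, by partial fractions.
Since `Real.log` is `log |·|`, the one formula serves on both sides of `ω`. -/
noncomputable def lorentzianHilbertPrimitive (a ω x : ℝ) : ℝ :=
  a / (π * (ω ^ 2 + a ^ 2)) * (ω / a * arctan (x / a) + (log (x ^ 2 + a ^ 2) / 2 - log (x - ω)))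

lemma hasDerivAt_lorentzianHilbertPrimitive {a ω x : ℝ} (ha : a ≠ 0) (hx : x ≠ ω) :
    HasDerivAt (lorentzianHilbertPrimitive a ω) (lorentzian a x / (ω - x)) x := by
  have hsq : x ^ 2 + a ^ 2 ≠ 0 := by positivity
  have hxω : x - ω ≠ 0 := sub_ne_zero.mpr hx
  have harctan := (hasDerivAt_arctan (x / a)).comp x (hasDerivAt_id' x |>.div_const a)
  have hlogsq := ((hasDerivAt_pow 2 x).add_const (a ^ 2)).log hsq
  have hlog := ((hasDerivAt_id' x).sub_const ω).log hxω
  refine (((harctan.const_mul _).add ((hlogsq.div_const 2).sub hlog)).const_mul _).congr_deriv ?_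
  have hωx : ω - x ≠ 0 := sub_ne_zero.mpr hx.symm
  simp only [lorentzian, Nat.cast_ofNat]
  field_simp
  ring

lemma tendsto_log_sq_add_sq_div_two_sub_log_cobounded (a ω : ℝ) :
    Tendsto (fun x => log (x ^ 2 + a ^ 2) / 2 - log (x - ω)) (cobounded ℝ) (𝓝 0) := by
  have hratio : Tendsto (fun t : ℝ => (1 + a ^ 2 * t ^ 2) / (1 - ω * t) ^ 2) (𝓝 0) (𝓝 1) := by
    have : ContinuousAt (fun t : ℝ => (1 + a ^ 2 * t ^ 2) / (1 - ω * t) ^ 2) 0 := by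
      fun_prop (disch := simp)
    simpa using this.tendsto
  have hlog := ((continuousAt_log one_ne_zero).tendsto.comp
    (hratio.comp tendsto_inv₀_cobounded)).div_const 2
  rw [log_one, zero_div] at hlog
  refine hlog.congr' ?_
  filter_upwards [eventually_ne_cobounded 0, eventually_ne_cobounded ω] with x hx0 hxω
  have hsq : x ^ 2 + a ^ 2 ≠ 0 := by positivity
  have hxω' : x - ω ≠ 0 := sub_ne_zero.mpr hxω
  have : (1 + a ^ 2 * x⁻¹ ^ 2) / (1 - ω * x⁻¹) ^ 2 = (x ^ 2 + a ^ 2) / (x - ω) ^ 2 := by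
    field_simp
  simp only [Function.comp_apply, this, log_div hsq (pow_ne_zero 2 hxω'), log_pow]
  ring

lemma tendsto_lorentzianHilbertPrimitive {a ω θ : ℝ} {l : Filter ℝ} (hl : l ≤ cobounded ℝ)
    (harctan : Tendsto (fun x => arctan (x / a)) l (𝓝 θ)) :
    Tendsto (lorentzianHilbertPrimitive a ω) l
      (𝓝 (a / (π * (ω ^ 2 + a ^ 2)) * (ω / a * θ))) := by
  unfold lorentzianHilbertPrimitive
  simpa using ((harctan.const_mul (ω / a)).add
    ((tendsto_log_sq_add_sq_div_two_sub_log_cobounded a ω).mono_left hl)).const_mul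
    (a / (π * (ω ^ 2 + a ^ 2)))

lemma setOf_lt_abs_sub_eq (ω ε : ℝ) : {x | ε < |ω - x|} = Iio (ω - ε) ∪ Ioi (ω + ε) := by
  ext x
  simp only [mem_ofPred_eq, mem_union, mem_Iio, mem_Ioi, lt_abs]
  constructor <;> rintro (h | h) <;> [left; right; left; right] <;> linarith

lemma integral_lorentzian_div_sub_of_lt_abs {a : ℝ} (ha : 0 < a) (ω : ℝ) {ε : ℝ} (hε : 0 < ε) :
    ∫ x in {x | ε < |ω - x|}, lorentzian a x / (ω - x) =
      lorentzianHilbertPrimitive a ω (ω - ε) - lorentzianHilbertPrimitive a ω (ω + ε) +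
        ω / (ω ^ 2 + a ^ 2) := by
  have hint := integrableOn_lorentzian_div_sub ha.le ω hε
  rw [setOf_lt_abs_sub_eq] at hint ⊢
  have hderiv : ∀ x ≠ ω, HasDerivAt (lorentzianHilbertPrimitive a ω)
      (lorentzian a x / (ω - x)) x := fun x hx => hasDerivAt_lorentzianHilbertPrimitive ha.ne' hx
  have hleft : ∫ x in Iio (ω - ε), lorentzian a x / (ω - x) =
      lorentzianHilbertPrimitive a ω (ω - ε) -
        a / (π * (ω ^ 2 + a ^ 2)) * (ω / a * -(π / 2)) := by
    rw [← integral_Iic_eq_integral_Iio]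
    refine integral_Iic_of_hasDerivAt_of_tendsto
      (hderiv _ (by linarith)).continuousAt.continuousWithinAt
      (fun x hx => hderiv x (by rw [mem_Iio] at hx; linarith))
      ((integrableOn_Iic_iff_integrableOn_Iio).mpr (hint.mono_set subset_union_left))
      (tendsto_lorentzianHilbertPrimitive IsOrderBornology.atBot_le_cobounded ?_)
    exact tendsto_nhds_of_tendsto_nhdsWithin tendsto_arctan_atBot |>.comp
      (tendsto_id.atBot_div_const ha)
  have hright : ∫ x in Ioi (ω + ε), lorentzian a x / (ω - x) =
      a / (π * (ω ^ 2 + a ^ 2)) * (ω / a * (π / 2)) -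
        lorentzianHilbertPrimitive a ω (ω + ε) := by
    refine integral_Ioi_of_hasDerivAt_of_tendsto
      (hderiv _ (by linarith)).continuousAt.continuousWithinAt
      (fun x hx => hderiv x (by rw [mem_Ioi] at hx; linarith))
      (hint.mono_set subset_union_right)
      (tendsto_lorentzianHilbertPrimitive IsOrderBornology.atTop_le_cobounded ?_)
    exact tendsto_nhds_of_tendsto_nhdsWithin tendsto_arctan_atTop |>.comp
      (tendsto_id.atTop_div_const ha)
  have hdisj : Disjoint (Iio (ω - ε)) (Ioi (ω + ε)) :=
    Iio_disjoint_Ioi_of_le (by linarith)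
  rw [setIntegral_union hdisj measurableSet_Ioi (hint.mono_set subset_union_left)
    (hint.mono_set subset_union_right), hleft, hright]
  field_simp
  ring

lemma tendsto_lorentzianHilbertPrimitive_sub_sub_add {a : ℝ} (ha : a ≠ 0) (ω : ℝ) :
    Tendsto (fun ε => lorentzianHilbertPrimitive a ω (ω - ε) -
      lorentzianHilbertPrimitive a ω (ω + ε)) (𝓝 0) (𝓝 0) := by
  let S : ℝ → ℝ := fun x => ω / a * arctan (x / a) + log (x ^ 2 + a ^ 2) / 2
  have hS : Continuous S := by
    refine .add (by fun_prop) (.div_const (.log (by fun_prop) fun x => ?_) 2)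
    positivity
  -- the singular terms `log |∓ε|` cancel
  have heq : ∀ ε, lorentzianHilbertPrimitive a ω (ω - ε) - lorentzianHilbertPrimitive a ω (ω + ε)
      = a / (π * (ω ^ 2 + a ^ 2)) * (S (ω - ε) - S (ω + ε)) := fun ε => by
    simp only [lorentzianHilbertPrimitive, S, sub_sub_cancel_left, add_sub_cancel_left,
      log_neg_eq_log]
    ring
  have hT : Continuous fun ε => a / (π * (ω ^ 2 + a ^ 2)) * (S (ω - ε) - S (ω + ε)) := by
    fun_prop
  simpa [heq] using hT.tendsto 0

lemma tendsto_integral_lorentzian_div_sub {a : ℝ} (ha : 0 < a) (ω : ℝ) :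
    Tendsto (fun ε => ∫ x in {x | ε < |ω - x|}, lorentzian a x / (ω - x)) (𝓝[>] 0)
      (𝓝 (ω / (ω ^ 2 + a ^ 2))) := by
  have h := ((tendsto_lorentzianHilbertPrimitive_sub_sub_add ha.ne' ω).mono_left
    (nhdsWithin_le_nhds (s := Ioi 0))).add_const (ω / (ω ^ 2 + a ^ 2))
  rw [zero_add] at h
  refine h.congr' ?_
  filter_upwards [self_mem_nhdsWithin] with ε (hε : 0 < ε)
  rw [integral_lorentzian_div_sub_of_lt_abs ha ω hε]

/-- For the Lorentzian `n(ω) = (1/π)(Γ/2)/(ω² + (Γ/2)²)` with `Γ > 0`,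
the principal value integral `P∫ n(ω')/(ω − ω') dω'` equals
`ω/(ω² + (Γ/2)²)` for every real `ω`, and consequently the dark-waveguide
coupling rate `Γ(ω) = 2π n(ω)/(H(ω)² + π² n(ω)²)` is the constant `Γ`. -/
theorem lorentzian_markovian_coupling (Γ : ℝ) (hΓ : 0 < Γ)
    (n : ℝ → ℝ) (hn : ∀ ω, n ω = (1 / π) * ((Γ / 2) / (ω ^ 2 + (Γ / 2) ^ 2)))
    (H : ℝ → ℝ) (hH : ∀ ω, H ω = ω / (ω ^ 2 + (Γ / 2) ^ 2)) :
    (∀ ω : ℝ,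
      Tendsto (fun ε : ℝ => ∫ ω' in {x : ℝ | ε < |ω - x|}, n ω' / (ω - ω'))
        (𝓝[>] 0) (𝓝 (H ω))) ∧
    (∀ ω : ℝ, 2 * π * n ω / ((H ω) ^ 2 + π ^ 2 * (n ω) ^ 2) = Γ) := by
  have hn' : n = lorentzian (Γ / 2) := funext hn
  refine ⟨fun ω => ?_, fun ω => ?_⟩
  · rw [hn', hH]
    exact tendsto_integral_lorentzian_div_sub (half_pos hΓ) ω
  · have hπ := pi_ne_zero
    have hD : ω ^ 2 + (Γ / 2) ^ 2 ≠ 0 := by positivity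
    rw [hn, hH]
    field_simp
end

section
/- Let D(x) = e^{−x²} ∫₀ˣ e^{t²} dt be the Dawson function and for σ > 0 define Γ(ω) = √(2π) σ e^{−x²} / (2D(x)² + (π/2)e^{−2x²}) with x = ω/(√2 σ). Then Γ(0) = (2√(2π)/π)σ, and as x → ∞, 2x² e^{−x²} · √(2π)σ / Γ(ω) → 1 (i.e., Γ(ω) ~ 2√(2π) σ x² e^{−x²}). -/
open Real MeasureTheory Filter Topology intervalIntegral

/-!
Since `2x²e^{-x²}√(2π)σ / Γ(ω) = 4(x D(x))² + π x² e^{-2x²}`, everything rests on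
`x D(x) → 1/2`. This follows by squeezing `∫₀ʸ e^{t²} dt` between integrals of exponentials of
affine functions: from below by the tangent `t² ≥ 2yt - y²`, from above by the chord
`t² ≤ (2y - 1)t - y(y - 1)` on `[y - 1, y]` together with the bound `e^{(y-1)²}` on `[0, y - 1]`.
-/

noncomputable def dawson (x : ℝ) : ℝ := exp (-x ^ 2) * ∫ t in (0 : ℝ)..x, exp (t ^ 2)

lemma integral_exp_mul_add {c : ℝ} (hc : c ≠ 0) (d a b : ℝ) :
    ∫ t in a..b, exp (c * t + d) = (exp (c * b + d) - exp (c * a + d)) / c := by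
  rw [integral_comp_mul_add exp hc, integral_exp, smul_eq_mul, inv_mul_eq_div]

lemma intervalIntegrable_exp_sq (a b : ℝ) :
    IntervalIntegrable (fun t ↦ exp (t ^ 2)) volume a b :=
  Continuous.intervalIntegrable (by fun_prop) a b

lemma one_sub_exp_div_two_le_mul_dawson {y : ℝ} (hy : 0 < y) :
    (1 - exp (-2 * y ^ 2)) / 2 ≤ y * dawson y := by
  have hint : (exp (y ^ 2) - exp (-y ^ 2)) / (2 * y) ≤ ∫ t in (0 : ℝ)..y, exp (t ^ 2) :=
    calc (exp (y ^ 2) - exp (-y ^ 2)) / (2 * y)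
        = ∫ t in (0 : ℝ)..y, exp (2 * y * t + -y ^ 2) := by
          rw [integral_exp_mul_add (by positivity)]; ring_nf
      _ ≤ _ := integral_mono_on hy.le (Continuous.intervalIntegrable (by fun_prop) _ _)
          (intervalIntegrable_exp_sq 0 y) fun t _ ↦ exp_le_exp.2 (by nlinarith [sq_nonneg (t - y)])
  have hexp : exp (-y ^ 2) * exp (-y ^ 2) = exp (-(2 * y ^ 2)) := by rw [← exp_add]; ring_nf
  calc (1 - exp (-2 * y ^ 2)) / 2
      = y * exp (-y ^ 2) * ((exp (y ^ 2) - exp (-y ^ 2)) / (2 * y)) := by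
        field_simp
        rw [mul_sub, ← exp_add, neg_add_cancel, exp_zero, hexp]
    _ ≤ y * exp (-y ^ 2) * ∫ t in (0 : ℝ)..y, exp (t ^ 2) := by gcongr
    _ = y * dawson y := by rw [dawson, mul_assoc]

lemma mul_dawson_le {y : ℝ} (hy : 1 ≤ y) :
    y * dawson y ≤ y ^ 2 * exp (1 - 2 * y) + y / (2 * y - 1) := by
  have hbulk : ∫ t in (0 : ℝ)..(y - 1), exp (t ^ 2) ≤ y * exp ((y - 1) ^ 2) := by
    have := integral_mono_on (by linarith) (intervalIntegrable_exp_sq 0 (y - 1))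
      intervalIntegrable_const fun t (ht : t ∈ Set.Icc 0 (y - 1)) ↦
        exp_le_exp.2 (pow_le_pow_left₀ ht.1 ht.2 2)
    rw [intervalIntegral.integral_const, smul_eq_mul] at this
    nlinarith [exp_pos ((y - 1) ^ 2)]
  have htail : ∫ t in (y - 1)..y, exp (t ^ 2) ≤ exp (y ^ 2) / (2 * y - 1) :=
    calc ∫ t in (y - 1)..y, exp (t ^ 2)
        ≤ ∫ t in (y - 1)..y, exp ((2 * y - 1) * t + -(y * (y - 1))) :=
          integral_mono_on (by linarith) (intervalIntegrable_exp_sq _ _)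
            (Continuous.intervalIntegrable (by fun_prop) _ _)
            fun t ht ↦ exp_le_exp.2 (by nlinarith [ht.1, ht.2])
      _ ≤ exp (y ^ 2) / (2 * y - 1) := by
        rw [integral_exp_mul_add (by linarith),
          show (2 * y - 1) * y + -(y * (y - 1)) = y ^ 2 by ring]
        gcongr
        · linarith
        · exact sub_le_self _ (exp_pos _).le
  have hsplit := integral_add_adjacent_intervals (intervalIntegrable_exp_sq 0 (y - 1))
    (intervalIntegrable_exp_sq (y - 1) y)
  have h1 : exp (-y ^ 2) * exp ((y - 1) ^ 2) = exp (1 - 2 * y) := by rw [← exp_add]; ring_nf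
  have h2 : exp (-y ^ 2) * exp (y ^ 2) = 1 := by rw [← exp_add]; simp
  calc y * dawson y = y * exp (-y ^ 2) * ∫ t in (0 : ℝ)..y, exp (t ^ 2) := by
        rw [dawson, mul_assoc]
    _ ≤ y * exp (-y ^ 2) * (y * exp ((y - 1) ^ 2) + exp (y ^ 2) / (2 * y - 1)) := by
        rw [← hsplit]; gcongr
    _ = y ^ 2 * (exp (-y ^ 2) * exp ((y - 1) ^ 2))
          + y * (exp (-y ^ 2) * exp (y ^ 2)) / (2 * y - 1) := by ring
    _ = _ := by rw [h1, h2, mul_one]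

lemma tendsto_sq_mul_exp_one_sub_two_mul_atTop :
    Tendsto (fun y : ℝ ↦ y ^ 2 * exp (1 - 2 * y)) atTop (𝓝 0) := by
  have h := ((tendsto_pow_mul_exp_neg_atTop_nhds_zero 2).comp
    (tendsto_id.const_mul_atTop two_pos)).const_mul (exp 1 / 4)
  rw [mul_zero] at h
  refine h.congr fun y ↦ ?_
  simp only [Function.comp_apply, id]
  rw [sub_eq_add_neg, exp_add]
  ring

lemma tendsto_div_two_mul_sub_one_atTop :
    Tendsto (fun y : ℝ ↦ y / (2 * y - 1)) atTop (𝓝 (1 / 2)) := by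
  have h := (tendsto_const_nhds (x := (2 : ℝ)).sub tendsto_inv_atTop_zero).inv₀ (by norm_num)
  rw [sub_zero, inv_eq_one_div] at h
  refine h.congr' ?_
  filter_upwards [eventually_gt_atTop 0] with y hy
  field_simp

theorem tendsto_mul_dawson_atTop : Tendsto (fun y ↦ y * dawson y) atTop (𝓝 (1 / 2)) := by
  have hlower : Tendsto (fun y : ℝ ↦ (1 - exp (-2 * y ^ 2)) / 2) atTop (𝓝 (1 / 2)) := by
    have h := tendsto_exp_atBot.comp
      ((tendsto_pow_atTop two_ne_zero).const_mul_atTop_of_neg (by norm_num : (-2 : ℝ) < 0))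
    simpa using (tendsto_const_nhds (x := (1 : ℝ)).sub h).div_const 2
  have hupper := tendsto_sq_mul_exp_one_sub_two_mul_atTop.add tendsto_div_two_mul_sub_one_atTop
  rw [zero_add] at hupper
  exact tendsto_of_tendsto_of_tendsto_of_le_of_le' hlower hupper
    (eventually_gt_atTop 0 |>.mono fun _ ↦ one_sub_exp_div_two_le_mul_dawson)
    (eventually_ge_atTop 1 |>.mono fun _ ↦ mul_dawson_le)

lemma tendsto_sq_mul_exp_neg_two_mul_sq_atTop :
    Tendsto (fun y : ℝ ↦ y ^ 2 * exp (-2 * y ^ 2)) atTop (𝓝 0) := by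
  have h := ((tendsto_pow_mul_exp_neg_atTop_nhds_zero 1).comp
    ((tendsto_pow_atTop two_ne_zero).const_mul_atTop two_pos)).div_const 2
  rw [zero_div] at h
  refine h.congr fun y ↦ ?_
  simp only [Function.comp_apply]
  ring_nf

theorem tendsto_four_mul_sq_mul_dawson_add_atTop :
    Tendsto (fun y ↦ 4 * (y * dawson y) ^ 2 + π * (y ^ 2 * exp (-2 * y ^ 2))) atTop (𝓝 1) := by
  have h := ((tendsto_mul_dawson_atTop.pow 2).const_mul 4).add
    (tendsto_sq_mul_exp_neg_two_mul_sq_atTop.const_mul π)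
  convert h using 2
  norm_num

/-- With the Dawson function `D(x) = e^{−x²} ∫₀ˣ e^{t²} dt` and, for `σ > 0`,
`Γ(ω) = √(2π) σ e^{−x²} / (2D(x)² + (π/2)e^{−2x²})` where `x = ω/(√2 σ)`,
one has `Γ(0) = (2√(2π)/π)σ`, and as `x → ∞`,
`2x² e^{−x²} √(2π) σ / Γ(ω) → 1` (i.e. `Γ(ω) ~ 2√(2π) σ x² e^{−x²}`). -/
theorem gaussian_dark_waveguide_rate (σ : ℝ) (hσ : 0 < σ)
    (D : ℝ → ℝ) (hD : ∀ x, D x = Real.exp (-x ^ 2) * ∫ t in (0 : ℝ)..x, Real.exp (t ^ 2))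
    (x : ℝ → ℝ) (hx : ∀ ω, x ω = ω / (Real.sqrt 2 * σ))
    (Γ : ℝ → ℝ)
    (hΓ : ∀ ω, Γ ω = Real.sqrt (2 * π) * σ * Real.exp (-(x ω) ^ 2) /
      (2 * (D (x ω)) ^ 2 + (π / 2) * Real.exp (-2 * (x ω) ^ 2))) :
    Γ 0 = (2 * Real.sqrt (2 * π) / π) * σ ∧
    Tendsto
      (fun ω : ℝ =>
        2 * (x ω) ^ 2 * Real.exp (-(x ω) ^ 2) * Real.sqrt (2 * π) * σ / Γ ω)
      atTop (𝓝 1) := by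
  obtain rfl : D = dawson := funext hD
  constructor
  · rw [hΓ, hx, zero_div, dawson, integral_same]
    field_simp
    simp
  · have hx_atTop : Tendsto x atTop atTop :=
      (tendsto_id.atTop_div_const (by positivity)).congr fun ω ↦ (hx ω).symm
    refine (tendsto_four_mul_sq_mul_dawson_add_atTop.comp hx_atTop).congr fun ω ↦ ?_
    have hσ' : Real.sqrt (2 * π) * σ ≠ 0 := by positivity
    rw [Function.comp_apply, hΓ]
    field_simp
    ring
end
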